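/- arXiv:2411.12627 — 6 statements merged into one kernel-verified Lean document; each statement's English description precedes it below -/
import Mathlib

section
/- Harten's TVD lemma (the criterion underlying the paper's Theorem 1): Let u, v : ℤ → ℝ be grid functions and let C, D assign a real number to each cell interface j+1/2. Suppose that for all j ∈ ℤ, v_j = u_j + C_{j+1/2}·Δ_{j+1/2}u − D_{j−1/2}·Δ_{j−1/2}u, and that for all j, C_{j+1/2} ≥ 0, D_{j+1/2} ≥ 0, and C_{j+1/2} + D_{j+1/2} ≤ 1. Then TV(v) ≤ TV(u). -/
/-- Total variation of a grid function `u : ℤ → ℝ`, a value in `[0, ∞]`. -/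
noncomputable def TV (u : ℤ → ℝ) : ENNReal :=
  ∑' j : ℤ, ENNReal.ofReal |u (j + 1) - u j|

/-- Harten's TVD lemma: if `v_j = u_j + C_{j+1/2}·Δ_{j+1/2}u − D_{j−1/2}·Δ_{j−1/2}u`
with `C_{j+1/2} ≥ 0`, `D_{j+1/2} ≥ 0`, and `C_{j+1/2} + D_{j+1/2} ≤ 1` for all `j`,
then `TV(v) ≤ TV(u)`.  Here the interface `j+1/2` is indexed by `j`. -/
theorem harten_tvd (u v : ℤ → ℝ) (C D : ℤ → ℝ)
    (hscheme : ∀ j : ℤ,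
      v j = u j + C j * (u (j + 1) - u j) - D (j - 1) * (u j - u (j - 1)))
    (hC : ∀ j : ℤ, 0 ≤ C j) (hD : ∀ j : ℤ, 0 ≤ D j)
    (hCD : ∀ j : ℤ, C j + D j ≤ 1) :
    TV v ≤ TV u := by
  set a : ℤ → ℝ := fun j => |u (j + 1) - u j| with ha
  have ha0 : ∀ j, 0 ≤ a j := fun j => abs_nonneg _
  set f : ℤ → ENNReal := fun j => ENNReal.ofReal ((1 - C j - D j) * a j) with hf
  set g : ℤ → ENNReal := fun j => ENNReal.ofReal (C j * a j) with hg
  set h : ℤ → ENNReal := fun j => ENNReal.ofReal (D j * a j) with hh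
  have key : ∀ j : ℤ, ENNReal.ofReal |v (j + 1) - v j| ≤ f j + g (j + 1) + h (j - 1) := by
    intro j
    have hdv : v (j + 1) - v j =
        (1 - C j - D j) * (u (j + 1) - u j) + C (j + 1) * (u (j + 1 + 1) - u (j + 1))
        + D (j - 1) * (u j - u (j - 1)) := by
      rw [hscheme (j + 1), hscheme j]
      have : j + 1 - 1 = j := by ring
      rw [this]; ring
    have habs : |v (j + 1) - v j| ≤
        (1 - C j - D j) * a j + C (j + 1) * a (j + 1) + D (j - 1) * a (j - 1) := by
      rw [hdv]
      have h1 : (1 : ℝ) - C j - D j ≥ 0 := by linarith [hCD j]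
      have e1 : a (j + 1) = |u (j + 1 + 1) - u (j + 1)| := rfl
      have e2 : a (j - 1) = |u (j - 1 + 1) - u (j - 1)| := rfl
      have e3 : j - 1 + 1 = j := by ring
      calc |(1 - C j - D j) * (u (j + 1) - u j) + C (j + 1) * (u (j + 1 + 1) - u (j + 1))
            + D (j - 1) * (u j - u (j - 1))|
          ≤ |(1 - C j - D j) * (u (j + 1) - u j)| + |C (j + 1) * (u (j + 1 + 1) - u (j + 1))|
            + |D (j - 1) * (u j - u (j - 1))| := by
            exact (abs_add_le _ _).trans (by gcongr; exact abs_add_le _ _)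
        _ = (1 - C j - D j) * a j + C (j + 1) * a (j + 1) + D (j - 1) * a (j - 1) := by
            rw [abs_mul, abs_mul, abs_mul, abs_of_nonneg h1, abs_of_nonneg (hC _),
              abs_of_nonneg (hD _), e1, e2, e3]
    calc ENNReal.ofReal |v (j + 1) - v j|
        ≤ ENNReal.ofReal ((1 - C j - D j) * a j + C (j + 1) * a (j + 1)
            + D (j - 1) * a (j - 1)) := ENNReal.ofReal_le_ofReal habs
      _ ≤ f j + g (j + 1) + h (j - 1) := by
          refine le_trans (ENNReal.ofReal_add_le) ?_
          exact add_le_add ENNReal.ofReal_add_le le_rfl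
  have hgshift : ∑' j : ℤ, g (j + 1) = ∑' j : ℤ, g j := by
    exact (Equiv.addRight (1 : ℤ)).tsum_eq g
  have hhshift : ∑' j : ℤ, h (j - 1) = ∑' j : ℤ, h j := by
    exact (Equiv.subRight (1 : ℤ)).tsum_eq h
  have hsum : ∀ j, f j + g j + h j = ENNReal.ofReal (a j) := by
    intro j
    have h1 : (0 : ℝ) ≤ 1 - C j - D j := by linarith [hCD j]
    rw [hf, hg, hh]
    rw [← ENNReal.ofReal_add (mul_nonneg h1 (ha0 j)) (mul_nonneg (hC j) (ha0 j)),
      ← ENNReal.ofReal_add (add_nonneg (mul_nonneg h1 (ha0 j)) (mul_nonneg (hC j) (ha0 j)))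
        (mul_nonneg (hD j) (ha0 j))]
    congr 1; ring
  calc TV v ≤ ∑' j : ℤ, (f j + g (j + 1) + h (j - 1)) := Summable.tsum_le_tsum key ENNReal.summable ENNReal.summable
    _ = (∑' j : ℤ, f j) + (∑' j : ℤ, g (j + 1)) + (∑' j : ℤ, h (j - 1)) := by
        rw [ENNReal.tsum_add, ENNReal.tsum_add]
    _ = (∑' j : ℤ, f j) + (∑' j : ℤ, g j) + (∑' j : ℤ, h j) := by rw [hgshift, hhshift]
    _ = ∑' j : ℤ, (f j + g j + h j) := by rw [ENNReal.tsum_add, ENNReal.tsum_add]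
    _ = TV u := by simp only [hsum]; rfl
end

section
/- Implicit Harten–Yee TVD lemma (the criterion underlying the implicit cases of the paper's Theorem 1): Let θ ∈ [0,1], let u, v : ℤ → ℝ be grid functions with TV(v) < ∞, and let C, D, Ĉ, D̂ assign real numbers to each cell interface j+1/2 with Ĉ and D̂ bounded. Suppose that for all j ∈ ℤ, v_j − θ[Ĉ_{j+1/2}·Δ_{j+1/2}v − D̂_{j−1/2}·Δ_{j−1/2}v] = u_j + (1−θ)[C_{j+1/2}·Δ_{j+1/2}u − D_{j−1/2}·Δ_{j−1/2}u], and that for all j: C_{j+1/2} ≥ 0, D_{j+1/2} ≥ 0, (1−θ)(C_{j+1/2} + D_{j+1/2}) ≤ 1, Ĉ_{j+1/2} ≥ 0, and D̂_{j+1/2} ≥ 0. Then TV(v) ≤ TV(u). -/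
/-!
The θ-scheme factors through `w_j = u_j + (1-θ)[C_{j+1/2} Δ_{j+1/2}u − D_{j-1/2} Δ_{j-1/2}u]`:
an explicit step `u ↦ w` with coefficients `(1-θ)C, (1-θ)D`, then an implicit step
`v_j − θ[Ĉ_{j+1/2} Δ_{j+1/2}v − D̂_{j-1/2} Δ_{j-1/2}v] = w_j`.

Differencing the explicit step writes `Δ_{j+1/2}w` as a combination of `Δu` at
`j-1/2, j+1/2, j+3/2` with nonnegative weights in which each `Δ_{k+1/2}u` has total weight `1`,
so `TV w ≤ TV u`. Differencing the implicit step gives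
`(1 + Ĉ_{j+1/2} + D̂_{j+1/2}) Δ_{j+1/2}v
  = Δ_{j+1/2}w + Ĉ_{j+3/2} Δ_{j+3/2}v + D̂_{j-1/2} Δ_{j-1/2}v`;
after taking absolute values and summing, `∑ Ĉ|Δv|` and `∑ D̂|Δv|` occur on both sides and
cancel, which is legitimate because they are finite when `Ĉ, D̂` are bounded and `TV v < ∞`.
All sums live in `ℝ≥0∞`, so no summability of `Δu` is needed.
-/

open ENNReal fwdDiff

lemma TV_eq_tsum_fwdDiff (u : ℤ → ℝ) : TV u = ∑' j, ENNReal.ofReal |Δ_[1] u j| := rfl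

lemma ENNReal.tsum_add_shift_add_shift (a b c : ℤ → ℝ≥0∞) :
    ∑' j, (a j + b (j + 1) + c (j - 1)) = ∑' j, (a j + b j + c j) := by
  simp only [ENNReal.tsum_add]
  rw [show ∑' j, b (j + 1) = ∑' j, b j from (Equiv.addRight 1).tsum_eq b,
    show ∑' j, c (j - 1) = ∑' j, c j from (Equiv.subRight 1).tsum_eq c]

lemma ENNReal.ofReal_abs_mul_add_mul_add_mul_le {a b c x y z : ℝ}
    (ha : 0 ≤ a) (hb : 0 ≤ b) (hc : 0 ≤ c) :
    ENNReal.ofReal |a * x + b * y + c * z|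
      ≤ ENNReal.ofReal (a * |x|) + ENNReal.ofReal (b * |y|) + ENNReal.ofReal (c * |z|) := by
  have h : |a * x + b * y + c * z| ≤ a * |x| + b * |y| + c * |z| := by
    calc |a * x + b * y + c * z| ≤ |a * x| + |b * y| + |c * z| :=
          (abs_add_le _ _).trans (add_le_add_left (abs_add_le _ _) _)
      _ = a * |x| + b * |y| + c * |z| := by
          rw [abs_mul, abs_mul, abs_mul, abs_of_nonneg ha, abs_of_nonneg hb, abs_of_nonneg hc]
  rw [← ENNReal.ofReal_add (by positivity) (by positivity),
    ← ENNReal.ofReal_add (by positivity) (by positivity)]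
  exact ENNReal.ofReal_le_ofReal h

theorem TV_le_of_explicit_scheme {u w C D : ℤ → ℝ}
    (hw : ∀ j, w j = u j + C j * Δ_[1] u j - D (j - 1) * Δ_[1] u (j - 1))
    (hC : ∀ j, 0 ≤ C j) (hD : ∀ j, 0 ≤ D j) (hCD : ∀ j, C j + D j ≤ 1) :
    TV w ≤ TV u := by
  have hincr : ∀ j, Δ_[1] w j = (1 - C j - D j) * Δ_[1] u j + C (j + 1) * Δ_[1] u (j + 1)
      + D (j - 1) * Δ_[1] u (j - 1) := by
    intro j
    have := hw (j + 1)
    rw [add_sub_cancel_right] at this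
    simp only [fwdDiff, sub_add_cancel] at *
    linear_combination this - hw j
  rw [TV_eq_tsum_fwdDiff, TV_eq_tsum_fwdDiff]
  calc ∑' j, ENNReal.ofReal |Δ_[1] w j|
      ≤ ∑' j, (ENNReal.ofReal ((1 - C j - D j) * |Δ_[1] u j|)
          + ENNReal.ofReal (C (j + 1) * |Δ_[1] u (j + 1)|)
          + ENNReal.ofReal (D (j - 1) * |Δ_[1] u (j - 1)|)) := by
        refine ENNReal.tsum_le_tsum fun j => ?_
        rw [hincr]
        exact ENNReal.ofReal_abs_mul_add_mul_add_mul_le (by linarith [hCD j]) (hC _) (hD _)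
    _ = ∑' j, ENNReal.ofReal |Δ_[1] u j| := by
        rw [ENNReal.tsum_add_shift_add_shift
          (fun j => ENNReal.ofReal ((1 - C j - D j) * |Δ_[1] u j|))
          (fun j => ENNReal.ofReal (C j * |Δ_[1] u j|))
          (fun j => ENNReal.ofReal (D j * |Δ_[1] u j|))]
        refine tsum_congr fun j => ?_
        have h₀ : 0 ≤ (1 - C j - D j) * |Δ_[1] u j| :=
          mul_nonneg (by linarith [hCD j]) (abs_nonneg _)
        have h₁ : 0 ≤ C j * |Δ_[1] u j| := mul_nonneg (hC j) (abs_nonneg _)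
        have h₂ : 0 ≤ D j * |Δ_[1] u j| := mul_nonneg (hD j) (abs_nonneg _)
        rw [← ENNReal.ofReal_add h₀ h₁, ← ENNReal.ofReal_add (add_nonneg h₀ h₁) h₂]
        ring_nf

lemma tsum_ofReal_mul_abs_fwdDiff_ne_top {v C : ℤ → ℝ} (hv : TV v ≠ ⊤)
    (hC : ∃ M, ∀ j, C j ≤ M) :
    ∑' j, ENNReal.ofReal (C j * |Δ_[1] v j|) ≠ ⊤ := by
  obtain ⟨M, hM⟩ := hC
  refine ne_top_of_le_ne_top (ENNReal.mul_ne_top (ofReal_ne_top (r := M)) hv) ?_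
  rw [TV_eq_tsum_fwdDiff, ← ENNReal.tsum_mul_left]
  refine ENNReal.tsum_le_tsum fun j => ?_
  rw [← ENNReal.ofReal_mul' (abs_nonneg _)]
  exact ENNReal.ofReal_le_ofReal (mul_le_mul_of_nonneg_right (hM j) (abs_nonneg _))

theorem TV_le_of_implicit_scheme {u v C D : ℤ → ℝ} (hv : TV v ≠ ⊤)
    (hscheme : ∀ j, v j - (C j * Δ_[1] v j - D (j - 1) * Δ_[1] v (j - 1)) = u j)
    (hC : ∀ j, 0 ≤ C j) (hD : ∀ j, 0 ≤ D j)
    (hC_bdd : ∃ M, ∀ j, C j ≤ M) (hD_bdd : ∃ M, ∀ j, D j ≤ M) :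
    TV v ≤ TV u := by
  have hincr : ∀ j, (1 + C j + D j) * Δ_[1] v j = Δ_[1] u j + C (j + 1) * Δ_[1] v (j + 1)
      + D (j - 1) * Δ_[1] v (j - 1) := by
    intro j
    have := hscheme (j + 1)
    rw [add_sub_cancel_right] at this
    simp only [fwdDiff, sub_add_cancel] at *
    linear_combination this - hscheme j
  set b : ℤ → ℝ≥0∞ := fun j => ENNReal.ofReal (C j * |Δ_[1] v j|)
  set c : ℤ → ℝ≥0∞ := fun j => ENNReal.ofReal (D j * |Δ_[1] v j|)
  have hpoint : ∀ j, ENNReal.ofReal |Δ_[1] v j| + b j + c j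
      ≤ ENNReal.ofReal |Δ_[1] u j| + b (j + 1) + c (j - 1) := by
    intro j
    have hlhs : ENNReal.ofReal |Δ_[1] v j| + b j + c j
        = ENNReal.ofReal |(1 + C j + D j) * Δ_[1] v j| := by
      have hcoef : 0 ≤ 1 + C j + D j := by linarith [hC j, hD j]
      rw [abs_mul, abs_of_nonneg hcoef, add_mul, add_mul, one_mul,
        ENNReal.ofReal_add (add_nonneg (abs_nonneg _) (mul_nonneg (hC j) (abs_nonneg _)))
          (mul_nonneg (hD j) (abs_nonneg _)),
        ENNReal.ofReal_add (abs_nonneg _) (mul_nonneg (hC j) (abs_nonneg _))]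
    rw [hlhs, hincr]
    simpa only [one_mul] using
      ENNReal.ofReal_abs_mul_add_mul_add_mul_le (x := Δ_[1] u j) zero_le_one
        (hC (j + 1)) (hD (j - 1))
  have hsum : TV v + (∑' j, b j + ∑' j, c j) ≤ TV u + (∑' j, b j + ∑' j, c j) := by
    have := (ENNReal.tsum_le_tsum hpoint).trans_eq (ENNReal.tsum_add_shift_add_shift _ b c)
    simpa only [ENNReal.tsum_add, add_assoc, TV_eq_tsum_fwdDiff] using this
  exact ENNReal.le_of_add_le_add_right (ENNReal.add_ne_top.2
    ⟨tsum_ofReal_mul_abs_fwdDiff_ne_top hv hC_bdd,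
      tsum_ofReal_mul_abs_fwdDiff_ne_top hv hD_bdd⟩) hsum

/-- Implicit Harten–Yee TVD lemma: let `θ ∈ [0,1]`, `TV(v) < ∞`, `Ĉ`, `D̂` bounded, and
suppose `v_j − θ[Ĉ_{j+1/2}·Δ_{j+1/2}v − D̂_{j−1/2}·Δ_{j−1/2}v]
       = u_j + (1−θ)[C_{j+1/2}·Δ_{j+1/2}u − D_{j−1/2}·Δ_{j−1/2}u]` for all `j`,
with `C ≥ 0`, `D ≥ 0`, `(1−θ)(C + D) ≤ 1`, `Ĉ ≥ 0`, `D̂ ≥ 0` at every interface.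
Then `TV(v) ≤ TV(u)`.  Interfaces `j+1/2` are indexed by `j`. -/
theorem harten_yee_implicit_tvd (θ : ℝ) (hθ0 : 0 ≤ θ) (hθ1 : θ ≤ 1)
    (u v : ℤ → ℝ) (hv : TV v < ⊤)
    (C D Chat Dhat : ℤ → ℝ)
    (hChat_bdd : ∃ M : ℝ, ∀ j : ℤ, |Chat j| ≤ M)
    (hDhat_bdd : ∃ M : ℝ, ∀ j : ℤ, |Dhat j| ≤ M)
    (hscheme : ∀ j : ℤ,
      v j - θ * (Chat j * (v (j + 1) - v j) - Dhat (j - 1) * (v j - v (j - 1)))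
        = u j + (1 - θ) * (C j * (u (j + 1) - u j) - D (j - 1) * (u j - u (j - 1))))
    (hC : ∀ j : ℤ, 0 ≤ C j) (hD : ∀ j : ℤ, 0 ≤ D j)
    (hCD : ∀ j : ℤ, (1 - θ) * (C j + D j) ≤ 1)
    (hChat : ∀ j : ℤ, 0 ≤ Chat j) (hDhat : ∀ j : ℤ, 0 ≤ Dhat j) :
    TV v ≤ TV u := by
  have hθ_bdd : ∀ {E : ℤ → ℝ}, (∃ M, ∀ j, |E j| ≤ M) → ∃ M, ∀ j, θ * E j ≤ M :=
    fun ⟨M, hM⟩ => ⟨θ * M, fun j =>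
      mul_le_mul_of_nonneg_left ((le_abs_self _).trans (hM j)) hθ0⟩
  set w : ℤ → ℝ := fun j => u j + (1 - θ) * (C j * Δ_[1] u j - D (j - 1) * Δ_[1] u (j - 1))
  calc TV v
      ≤ TV w := TV_le_of_implicit_scheme (C := fun j => θ * Chat j) (D := fun j => θ * Dhat j)
        hv.ne
        (fun j => by simp only [w, fwdDiff, sub_add_cancel]; linear_combination hscheme j)
        (fun j => mul_nonneg hθ0 (hChat j)) (fun j => mul_nonneg hθ0 (hDhat j))
        (hθ_bdd hChat_bdd) (hθ_bdd hDhat_bdd)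
    _ ≤ TV u := TV_le_of_explicit_scheme (C := fun j => (1 - θ) * C j)
        (D := fun j => (1 - θ) * D j) (fun j => by ring)
        (fun j => mul_nonneg (by linarith) (hC j)) (fun j => mul_nonneg (by linarith) (hD j))
        (fun j => by linarith [hCD j])
end

section
/- Theorem 1, first case: For the new FCT scheme with σ̃ = |a| (so that f̂^{AD}_{j+1/2}(w) = (|a|/2)·Δ_{j+1/2}w is the second-order central antidiffusive flux), let θ ∈ [0,1) and suppose λ|a| < 1/(2(1−θ)). If u and v are grid functions satisfying the θ-scheme (and additionally TV(v) < ∞ when θ > 0), then TV(v) ≤ TV(u); i.e., the new FCT algorithm without the monotone first step is TVD under the condition λ|a| < 1/(2(1−θ)). -/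
/-- The new FCT antidiffusive flux `f̂^{AD}_{j+1/2}(w) = (σ̃/2)·Δ_{j+1/2}w`. -/
noncomputable def fluxAD (σ : ℝ) (w : ℤ → ℝ) (j : ℤ) : ℝ :=
  σ / 2 * (w (j + 1) - w j)

/-- The limited antidiffusive flux of the new FCT:
`f̂^C_{j+1/2}(w) = S·max{0, min(S·σ̃·Δ_{j−1/2}w, |f̂^{AD}_{j+1/2}(w)|, S·σ̃·Δ_{j+3/2}w)}`
with `S = sign(f̂^{AD}_{j+1/2}(w))` (so it vanishes when the antidiffusive flux does). -/
noncomputable def fluxC (σ : ℝ) (w : ℤ → ℝ) (j : ℤ) : ℝ :=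
  Real.sign (fluxAD σ w j) *
    max 0 (min (Real.sign (fluxAD σ w j) * (σ * (w j - w (j - 1))))
      (min |fluxAD σ w j|
        (Real.sign (fluxAD σ w j) * (σ * (w (j + 2) - w (j + 1))))))

/-- The new FCT numerical flux (without the diffusive first step):
`f̂_{j+1/2}(w) = (1/2)[a(w_j + w_{j+1}) − |a|·Δ_{j+1/2}w] + f̂^C_{j+1/2}(w)`. -/
noncomputable def numFlux (a σ : ℝ) (w : ℤ → ℝ) (j : ℤ) : ℝ :=
  (1 / 2) * (a * (w j + w (j + 1)) - |a| * (w (j + 1) - w j)) + fluxC σ w j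

/-! The limited flux `f̂^C_{j+1/2}` is a fraction in `[0, 1]` of each of `σ̃ Δ_{j−1/2}w`,
`f̂^{AD}_{j+1/2}(w)` and `σ̃ Δ_{j+3/2}w`. Expressing the limited fluxes on both sides of cell `j`
through the increment on the upwind side puts the flux difference in Harten's incremental form
`−C_j Δ_{j+1/2}w + D_j Δ_{j−1/2}w`, with `C, D ≥ 0` as long as `0 ≤ σ̃ ≤ 2|a|`, and
`C_j + D_{j+1} ≤ |a| + σ̃`. The θ-scheme then reads `w = (explicit step on u) = (implicit step
on v)`. Harten's argument gives `TV(w) ≤ TV(u)` as soon as `λ(1−θ)(C_j + D_{j+1}) ≤ 1`, which is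
the CFL condition, and `TV(v) ≤ TV(w)` with no condition; in the implicit step the terms that
telescope away are bounded by a multiple of `TV(v)` and must be finite to be cancelled. -/

theorem tsum_comp_add_right {G M : Type*} [AddGroup G] [AddCommMonoid M] [TopologicalSpace M]
    (f : G → M) (k : G) : ∑' j, f (j + k) = ∑' j, f j :=
  (Equiv.addRight k).tsum_eq f

theorem tsum_comp_sub_right {G M : Type*} [AddGroup G] [AddCommMonoid M] [TopologicalSpace M]
    (f : G → M) (k : G) : ∑' j, f (j - k) = ∑' j, f j :=
  (Equiv.subRight k).tsum_eq f

theorem abs_mul_add_mul_add_mul_le {p q r x y z : ℝ} (hp : 0 ≤ p) (hq : 0 ≤ q) (hr : 0 ≤ r) :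
    |p * x + q * y + r * z| ≤ p * |x| + q * |y| + r * |z| := by
  calc |p * x + q * y + r * z| ≤ |p * x| + |q * y| + |r * z| :=
        (abs_add_le _ _).trans (add_le_add_left (abs_add_le _ _) _)
    _ = p * |x| + q * |y| + r * |z| := by
        rw [abs_mul, abs_mul, abs_mul, abs_of_nonneg hp, abs_of_nonneg hq, abs_of_nonneg hr]

theorem tsum_ofReal_mul_le {c d : ℤ → ℝ} {K : ℝ} (hK : 0 ≤ K) (hc : ∀ j, c j ≤ K)
    (hd : ∀ j, 0 ≤ d j) :
    ∑' j, ENNReal.ofReal (c j * d j) ≤ ENNReal.ofReal K * ∑' j, ENNReal.ofReal (d j) := by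
  rw [← ENNReal.tsum_mul_left]
  refine ENNReal.tsum_le_tsum fun j => ?_
  rw [← ENNReal.ofReal_mul hK]
  exact ENNReal.ofReal_le_ofReal (mul_le_mul_of_nonneg_right (hc j) (hd j))

theorem TV_le_of_explicit_incremental {u w A B : ℤ → ℝ} (hA : ∀ j, 0 ≤ A j) (hB : ∀ j, 0 ≤ B j)
    (hAB : ∀ j, A j + B (j + 1) ≤ 1)
    (hw : ∀ j, w j = u j + A j * (u (j + 1) - u j) - B j * (u j - u (j - 1))) :
    TV w ≤ TV u := by
  set d : ℤ → ℝ := fun j => |u (j + 1) - u j|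
  have hjump : ∀ j, |w (j + 1) - w j| ≤
      (1 - (A j + B (j + 1))) * d j + A (j + 1) * d (j + 1) + B (j - 1 + 1) * d (j - 1) := by
    intro j
    have hdiff : w (j + 1) - w j = (1 - (A j + B (j + 1))) * (u (j + 1) - u j)
        + A (j + 1) * (u (j + 1 + 1) - u (j + 1))
        + B (j - 1 + 1) * (u (j - 1 + 1) - u (j - 1)) := by
      rw [hw, hw, add_sub_cancel_right, sub_add_cancel]; ring
    rw [hdiff]
    exact abs_mul_add_mul_add_mul_le (by linarith [hAB j]) (hA _) (hB _)
  calc TV w ≤ ∑' j, (ENNReal.ofReal ((1 - (A j + B (j + 1))) * d j)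
        + ENNReal.ofReal (A (j + 1) * d (j + 1)) + ENNReal.ofReal (B (j - 1 + 1) * d (j - 1))) :=
        ENNReal.tsum_le_tsum fun j => (ENNReal.ofReal_le_ofReal (hjump j)).trans
          (ENNReal.ofReal_add_le.trans (add_le_add_left ENNReal.ofReal_add_le _))
    _ = ∑' j, (ENNReal.ofReal ((1 - (A j + B (j + 1))) * d j)
        + ENNReal.ofReal (A j * d j) + ENNReal.ofReal (B (j + 1) * d j)) := by
        rw [ENNReal.tsum_add, ENNReal.tsum_add, ENNReal.tsum_add, ENNReal.tsum_add,
          tsum_comp_add_right (fun j => ENNReal.ofReal (A j * d j)),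
          tsum_comp_sub_right (fun j => ENNReal.ofReal (B (j + 1) * d j))]
    _ = TV u := by
        refine tsum_congr fun j => ?_
        have hd : 0 ≤ d j := abs_nonneg _
        have hc : 0 ≤ 1 - (A j + B (j + 1)) := by linarith [hAB j]
        rw [← ENNReal.ofReal_add (mul_nonneg hc hd) (mul_nonneg (hA j) hd),
          ← ENNReal.ofReal_add (add_nonneg (mul_nonneg hc hd) (mul_nonneg (hA j) hd))
            (mul_nonneg (hB _) hd)]
        show _ = ENNReal.ofReal (d j)
        congr 1; ring

theorem TV_le_of_implicit_incremental {v w P Q : ℤ → ℝ} {K : ℝ} (hP : ∀ j, 0 ≤ P j)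
    (hQ : ∀ j, 0 ≤ Q j) (hPQ : ∀ j, P j + Q (j + 1) ≤ K) (hv : TV v ≠ ⊤)
    (hw : ∀ j, w j = v j - P j * (v (j + 1) - v j) + Q j * (v j - v (j - 1))) :
    TV v ≤ TV w := by
  set d : ℤ → ℝ := fun j => |v (j + 1) - v j|
  have hd : ∀ j, 0 ≤ d j := fun j => abs_nonneg _
  have hjump : ∀ j, d j + (P j + Q (j + 1)) * d j ≤
      |w (j + 1) - w j| + P (j + 1) * d (j + 1) + Q (j - 1 + 1) * d (j - 1) := by
    intro j
    have hdiff : (1 + (P j + Q (j + 1))) * (v (j + 1) - v j) = 1 * (w (j + 1) - w j)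
        + P (j + 1) * (v (j + 1 + 1) - v (j + 1))
        + Q (j - 1 + 1) * (v (j - 1 + 1) - v (j - 1)) := by
      rw [hw, hw, add_sub_cancel_right, sub_add_cancel]; ring
    have hcoef : 0 ≤ 1 + (P j + Q (j + 1)) := by linarith [hP j, hQ (j + 1)]
    calc d j + (P j + Q (j + 1)) * d j = |(1 + (P j + Q (j + 1))) * (v (j + 1) - v j)| := by
          rw [abs_mul, abs_of_nonneg hcoef]; ring
      _ ≤ 1 * |w (j + 1) - w j| + P (j + 1) * d (j + 1) + Q (j - 1 + 1) * d (j - 1) := by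
          rw [hdiff]; exact abs_mul_add_mul_add_mul_le zero_le_one (hP _) (hQ _)
      _ = _ := by rw [one_mul]
  set X := ∑' j, ENNReal.ofReal ((P j + Q (j + 1)) * d j)
  have hX : X ≠ ⊤ :=
    ne_top_of_le_ne_top (ENNReal.mul_ne_top ENNReal.ofReal_ne_top hv)
      (tsum_ofReal_mul_le ((add_nonneg (hP 0) (hQ 1)).trans (hPQ 0)) hPQ hd)
  have hcancel : TV v + X ≤ TV w + X := calc
    TV v + X = ∑' j, (ENNReal.ofReal (d j) + ENNReal.ofReal ((P j + Q (j + 1)) * d j)) :=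
        ENNReal.tsum_add.symm
    _ ≤ ∑' j, (ENNReal.ofReal |w (j + 1) - w j| + ENNReal.ofReal (P (j + 1) * d (j + 1))
        + ENNReal.ofReal (Q (j - 1 + 1) * d (j - 1))) :=
        ENNReal.tsum_le_tsum fun j => by
          rw [← ENNReal.ofReal_add (hd j) (mul_nonneg (add_nonneg (hP j) (hQ _)) (hd j))]
          exact (ENNReal.ofReal_le_ofReal (hjump j)).trans
            (ENNReal.ofReal_add_le.trans (add_le_add_left ENNReal.ofReal_add_le _))
    _ = TV w + X := by
        rw [ENNReal.tsum_add, ENNReal.tsum_add,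
          tsum_comp_add_right (fun j => ENNReal.ofReal (P j * d j)),
          tsum_comp_sub_right (fun j => ENNReal.ofReal (Q (j + 1) * d j)), add_assoc,
          ← ENNReal.tsum_add]
        refine congrArg (TV w + ·) (tsum_congr fun j => ?_)
        rw [← ENNReal.ofReal_add (mul_nonneg (hP j) (hd j)) (mul_nonneg (hQ _) (hd j)), add_mul]
  exact (ENNReal.add_le_add_iff_right hX).mp hcancel

theorem exists_eq_mul_of_mul_nonneg_of_abs_le {x t : ℝ} (hxt : 0 ≤ x * t) (habs : |x| ≤ |t|) :
    ∃ β, 0 ≤ β ∧ β ≤ 1 ∧ x = β * t := by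
  rcases eq_or_ne t 0 with rfl | ht
  · exact ⟨0, le_rfl, zero_le_one, by simpa using habs⟩
  · refine ⟨x / t, ?_, ?_, (div_mul_cancel₀ x ht).symm⟩
    · rw [← mul_div_mul_right x t ht]
      exact div_nonneg hxt (mul_self_nonneg t)
    · exact (le_abs_self _).trans (by rwa [abs_div, div_le_one (abs_pos.mpr ht)])

theorem mul_nonneg_and_abs_le_of_le_max {s m t : ℝ} (hs : |s| ≤ 1) (hm : 0 ≤ m)
    (hmt : m ≤ max 0 (s * t)) : 0 ≤ s * m * t ∧ |s * m| ≤ |t| := by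
  constructor
  · rcases le_total (s * t) 0 with hst | hst
    · rw [le_antisymm (hmt.trans_eq (max_eq_left hst)) hm]; simp
    · calc (0 : ℝ) ≤ m * (s * t) := mul_nonneg hm hst
        _ = s * m * t := by ring
  · calc |s * m| = |s| * m := by rw [abs_mul, abs_of_nonneg hm]
      _ ≤ m := mul_le_of_le_one_left hm hs
      _ ≤ |s * t| := hmt.trans (max_le (abs_nonneg _) (le_abs_self _))
      _ ≤ |t| := by rw [abs_mul]; exact mul_le_of_le_one_left (abs_nonneg t) hs

theorem exists_fluxC_eq_mul {σ t : ℝ} {w : ℤ → ℝ} {j : ℤ}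
    (ht : t = σ * (w j - w (j - 1)) ∨ t = fluxAD σ w j ∨ t = σ * (w (j + 2) - w (j + 1))) :
    ∃ β, 0 ≤ β ∧ β ≤ 1 ∧ fluxC σ w j = β * t := by
  unfold fluxC
  set F := fluxAD σ w j
  have hs : |Real.sign F| ≤ 1 := by
    rcases Real.sign_apply_eq F with h | h | h <;> simp [h]
  have hmt : max 0 (min (Real.sign F * (σ * (w j - w (j - 1))))
      (min |F| (Real.sign F * (σ * (w (j + 2) - w (j + 1)))))) ≤ max 0 (Real.sign F * t) := by
    refine max_le_max le_rfl ?_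
    rcases ht with rfl | rfl | rfl
    · exact min_le_left _ _
    · have hF : |F| = Real.sign F * F := by
        rcases lt_trichotomy F 0 with h | h | h
        · rw [Real.sign_of_neg h, abs_of_neg h]; ring
        · rw [h, Real.sign_zero, abs_zero, mul_zero]
        · rw [Real.sign_of_pos h, abs_of_pos h, one_mul]
      exact (min_le_right _ _).trans ((min_le_left _ _).trans hF.le)
    · exact (min_le_right _ _).trans (min_le_right _ _)
  obtain ⟨hmul, habs⟩ := mul_nonneg_and_abs_le_of_le_max hs (le_max_left _ _) hmt
  exact exists_eq_mul_of_mul_nonneg_of_abs_le hmul habs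

theorem numFlux_sub_eq_incremental {a σ : ℝ} (hσ : 0 ≤ σ) (hσa : σ ≤ 2 * |a|) (w : ℤ → ℝ) :
    ∃ C D : ℤ → ℝ, (∀ j, 0 ≤ C j ∧ 0 ≤ D j ∧ C j + D (j + 1) ≤ |a| + σ) ∧
      ∀ j, numFlux a σ w j - numFlux a σ w (j - 1) =
        -C j * (w (j + 1) - w j) + D j * (w j - w (j - 1)) := by
  choose α hα0 hα1 hα using fun j =>
    exists_fluxC_eq_mul (σ := σ) (w := w) (j := j) (Or.inr (Or.inl rfl))
  rcases le_total 0 a with ha | ha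
  · choose β hβ0 hβ1 hβ using fun j =>
      exists_fluxC_eq_mul (σ := σ) (w := w) (j := j) (Or.inl rfl)
    rw [abs_of_nonneg ha] at hσa ⊢
    refine ⟨0, fun j => a + β j * σ - α (j - 1) * (σ / 2), fun j => ⟨le_rfl, ?_, ?_⟩, fun j => ?_⟩
    · linarith [mul_nonneg (hβ0 j) hσ, mul_le_mul_of_nonneg_right (hα1 (j - 1)) hσ]
    · simp only [Pi.zero_apply, add_sub_cancel_right, zero_add]
      linarith [mul_le_mul_of_nonneg_right (hβ1 (j + 1)) hσ, mul_nonneg (hα0 j) hσ]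
    · have hα' := hα (j - 1)
      simp only [fluxAD, sub_add_cancel] at hα'
      simp only [numFlux, abs_of_nonneg ha, hβ j, hα', Pi.zero_apply]
      ring
  · choose γ hγ0 hγ1 hγ using fun j =>
      exists_fluxC_eq_mul (σ := σ) (w := w) (j := j) (Or.inr (Or.inr rfl))
    rw [abs_of_nonpos ha] at hσa ⊢
    refine ⟨fun j => -a - α j * (σ / 2) + γ (j - 1) * σ, 0, fun j => ⟨?_, le_rfl, ?_⟩, fun j => ?_⟩
    · linarith [mul_nonneg (hγ0 (j - 1)) hσ, mul_le_mul_of_nonneg_right (hα1 j) hσ]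
    · simp only [Pi.zero_apply, add_zero]
      linarith [mul_le_mul_of_nonneg_right (hγ1 (j - 1)) hσ, mul_nonneg (hα0 j) hσ]
    · have hγ' := hγ (j - 1)
      rw [sub_add_cancel, show j - 1 + 2 = j + 1 by ring] at hγ'
      simp only [numFlux, abs_of_nonpos ha, hα j, fluxAD, hγ', sub_add_cancel, Pi.zero_apply]
      ring

theorem newFCT_TVD_central_general (a lam θ : ℝ) (hlam : 0 < lam)
    (hθ0 : 0 ≤ θ) (hθ1 : θ < 1) (hCFL : lam * |a| < 1 / (2 * (1 - θ)))
    (u v : ℤ → ℝ) (hfin : 0 < θ → TV v < ⊤)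
    (hscheme : ∀ j : ℤ, v j = u j
      - lam * (1 - θ) * (numFlux a |a| u j - numFlux a |a| u (j - 1))
      - lam * θ * (numFlux a |a| v j - numFlux a |a| v (j - 1))) :
    TV v ≤ TV u := by
  have hσa : |a| ≤ 2 * |a| := by linarith [abs_nonneg a]
  obtain ⟨Cu, Du, hCDu, hu⟩ := numFlux_sub_eq_incremental (abs_nonneg a) hσa u
  obtain ⟨Cv, Dv, hCDv, hv⟩ := numFlux_sub_eq_incremental (abs_nonneg a) hσa v
  have hμ : 0 ≤ lam * (1 - θ) := mul_nonneg hlam.le (by linarith)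
  have hν : 0 ≤ lam * θ := mul_nonneg hlam.le hθ0
  have hstab : lam * (1 - θ) * (|a| + |a|) ≤ 1 := by
    rw [lt_div_iff₀ (by linarith)] at hCFL
    linarith
  set w : ℤ → ℝ := fun j => u j - lam * (1 - θ) * (numFlux a |a| u j - numFlux a |a| u (j - 1))
  have hwu : TV w ≤ TV u :=
    TV_le_of_explicit_incremental (A := fun j => lam * (1 - θ) * Cu j)
      (B := fun j => lam * (1 - θ) * Du j) (fun j => mul_nonneg hμ (hCDu j).1)
      (fun j => mul_nonneg hμ (hCDu j).2.1)
      (fun j => by rw [← mul_add]; exact (mul_le_mul_of_nonneg_left (hCDu j).2.2 hμ).trans hstab)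
      (fun j => by simp only [w, hu]; ring)
  have hvw : TV v ≤ TV w := by
    rcases hθ0.eq_or_lt with rfl | hθ
    · refine (congrArg TV (funext fun j => ?_)).le
      rw [hscheme j]; ring
    · refine TV_le_of_implicit_incremental (P := fun j => lam * θ * Cv j)
        (Q := fun j => lam * θ * Dv j) (fun j => mul_nonneg hν (hCDv j).1)
        (fun j => mul_nonneg hν (hCDv j).2.1)
        (fun j => by rw [← mul_add]; exact mul_le_mul_of_nonneg_left (hCDv j).2.2 hν)
        (hfin hθ).ne (fun j => ?_)
      linear_combination lam * θ * hv j - hscheme j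
  exact hvw.trans hwu

/-- Theorem 1, first case: for the new FCT with `σ̃ = |a|` (second-order central
antidiffusive flux), `θ ∈ [0,1)`, and `λ|a| < 1/(2(1−θ))`, every solution `v` of the
θ-scheme starting from `u` (with `TV(v) < ∞` when `θ > 0`) satisfies `TV(v) ≤ TV(u)`. -/
theorem newFCT_TVD_central (a lam θ : ℝ) (ha : a ≠ 0) (hlam : 0 < lam)
    (hθ0 : 0 ≤ θ) (hθ1 : θ < 1) (hCFL : lam * |a| < 1 / (2 * (1 - θ)))
    (u v : ℤ → ℝ) (hfin : 0 < θ → TV v < ⊤)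
    (hscheme : ∀ j : ℤ, v j = u j
      - lam * (1 - θ) * (numFlux a |a| u j - numFlux a |a| u (j - 1))
      - lam * θ * (numFlux a |a| v j - numFlux a |a| v (j - 1))) :
    TV v ≤ TV u :=
  newFCT_TVD_central_general a lam θ hlam hθ0 hθ1 hCFL u v hfin hscheme
end

section
/- Unconditional TVD of the fully implicit new FCT (remark following Theorem 1): For θ = 1, the new FCT scheme without the monotone first step is unconditionally TVD: for either choice σ̃ = |a| or σ̃ = |a| − λa², for every λ > 0 and every a ≠ 0, if u and v are grid functions with TV(v) < ∞ satisfying the fully implicit scheme v_j = u_j − λ[f̂_{j+1/2}(v) − f̂_{j−1/2}(v)] for all j ∈ ℤ, then TV(v) ≤ TV(u). -/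
lemma fluxC_key (σ : ℝ) (w : ℤ → ℝ) (j : ℤ) :
    0 ≤ fluxC σ w j * (σ * (w j - w (j-1)) - fluxC σ w j) ∧
    0 ≤ fluxC σ w j * (σ / 2 * (w (j+1) - w j) - fluxC σ w j) ∧
    0 ≤ fluxC σ w j * (σ * (w (j+2) - w (j+1)) - fluxC σ w j) := by
  set f := fluxAD σ w j with hf
  have hfad : f = σ / 2 * (w (j+1) - w j) := rfl
  rcases lt_trichotomy f 0 with hneg | hzero | hpos
  · have hS : Real.sign f = -1 := Real.sign_of_neg hneg
    set X := min (Real.sign f * (σ * (w j - w (j - 1))))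
      (min |f| (Real.sign f * (σ * (w (j + 2) - w (j + 1))))) with hX
    have hC : fluxC σ w j = Real.sign f * max 0 X := rfl
    rcases le_total X 0 with hX0 | hX0
    · rw [hC, max_eq_left hX0]
      simp
    · have hmax : max 0 X = X := max_eq_right hX0
      have h1 : X ≤ Real.sign f * (σ * (w j - w (j - 1))) := min_le_left _ _
      have h2 : X ≤ |f| := le_trans (min_le_right _ _) (min_le_left _ _)
      have h3 : X ≤ Real.sign f * (σ * (w (j + 2) - w (j + 1))) :=
        le_trans (min_le_right _ _) (min_le_right _ _)
      rw [hS] at h1 h3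
      rw [hC, hmax, hS]
      have habs : |f| = -f := abs_of_neg hneg
      rw [habs] at h2
      refine ⟨?_, ?_, ?_⟩
      · nlinarith
      · rw [← hfad]; nlinarith
      · nlinarith
  · have hS : Real.sign f = 0 := by rw [hzero]; exact Real.sign_zero
    have hC : fluxC σ w j = 0 := by rw [fluxC, ← hf, hS, zero_mul]
    rw [hC]; simp
  · have hS : Real.sign f = 1 := Real.sign_of_pos hpos
    set X := min (Real.sign f * (σ * (w j - w (j - 1))))
      (min |f| (Real.sign f * (σ * (w (j + 2) - w (j + 1))))) with hX
    have hC : fluxC σ w j = Real.sign f * max 0 X := rfl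
    rcases le_total X 0 with hX0 | hX0
    · rw [hC, max_eq_left hX0]
      simp
    · have hmax : max 0 X = X := max_eq_right hX0
      have h1 : X ≤ Real.sign f * (σ * (w j - w (j - 1))) := min_le_left _ _
      have h2 : X ≤ |f| := le_trans (min_le_right _ _) (min_le_left _ _)
      have h3 : X ≤ Real.sign f * (σ * (w (j + 2) - w (j + 1))) :=
        le_trans (min_le_right _ _) (min_le_right _ _)
      rw [hS] at h1 h3
      rw [hC, hmax, hS]
      have habs : |f| = f := abs_of_pos hpos
      rw [habs] at h2
      refine ⟨?_, ?_, ?_⟩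
      · nlinarith
      · rw [← hfad]; nlinarith
      · nlinarith

lemma harten (u v : ℤ → ℝ) (M : ℝ) (C D : ℤ → ℝ)
    (hC0 : ∀ j, 0 ≤ C j) (hCM : ∀ j, C j ≤ M)
    (hD0 : ∀ j, 0 ≤ D j) (hDM : ∀ j, D j ≤ M)
    (hdec : ∀ j, u j - v j = -(C j) * (v (j+1) - v j) + D (j-1) * (v j - v (j-1)))
    (hv : TV v < ⊤) : TV v ≤ TV u := by
  set Δv : ℤ → ℝ := fun j => v (j+1) - v j with hΔv
  set Δu : ℤ → ℝ := fun j => u (j+1) - u j with hΔu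
  -- real identity
  have hid : ∀ j : ℤ, (1 + C j + D j) * Δv j
      = Δu j + C (j+1) * Δv (j+1) + D (j-1) * Δv (j-1) := by
    intro j
    have h1 := hdec j
    have h2 := hdec (j+1)
    have e1 : (j : ℤ) + 1 - 1 = j := by ring
    rw [e1] at h2
    have e2 : (j:ℤ) - 1 + 1 = j := by ring
    simp only [hΔv, hΔu, e2]
    linarith
  -- pointwise real inequality
  have hptr : ∀ j : ℤ, (1 + C j + D j) * |Δv j|
      ≤ |Δu j| + (C (j+1) * |Δv (j+1)| + D (j-1) * |Δv (j-1)|) := by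
    intro j
    have h0 : 0 ≤ 1 + C j + D j := by have := hC0 j; have := hD0 j; linarith
    calc (1 + C j + D j) * |Δv j| = |(1 + C j + D j) * Δv j| := by
            rw [abs_mul, abs_of_nonneg h0]
      _ = |Δu j + C (j+1) * Δv (j+1) + D (j-1) * Δv (j-1)| := by rw [hid j]
      _ ≤ |Δu j| + |C (j+1) * Δv (j+1)| + |D (j-1) * Δv (j-1)| := abs_add_three _ _ _
      _ = |Δu j| + (C (j+1) * |Δv (j+1)| + D (j-1) * |Δv (j-1)|) := by
            rw [abs_mul, abs_mul, abs_of_nonneg (hC0 _), abs_of_nonneg (hD0 _)]; ring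
  set F : ℤ → ENNReal := fun j => ENNReal.ofReal |Δv j| with hF
  set G : ℤ → ENNReal := fun j => ENNReal.ofReal |Δu j| with hG
  set c : ℤ → ENNReal := fun j => ENNReal.ofReal (C j) with hc
  set d : ℤ → ENNReal := fun j => ENNReal.ofReal (D j) with hd
  have hpt : ∀ j : ℤ, F j + (c j * F j + d j * F j)
      ≤ G j + (c (j+1) * F (j+1) + d (j-1) * F (j-1)) := by
    intro j
    have e1 : F j + (c j * F j + d j * F j)
        = ENNReal.ofReal ((1 + C j + D j) * |Δv j|) := by
      rw [ENNReal.ofReal_mul (by have := hC0 j; have := hD0 j; linarith),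
        ENNReal.ofReal_add (by have := hC0 j; linarith : (0:ℝ) ≤ 1 + C j) (hD0 j),
        ENNReal.ofReal_add (by norm_num : (0:ℝ) ≤ 1) (hC0 j), ENNReal.ofReal_one]
      simp only [hF, hc, hd]
      ring
    have e2 : G j + (c (j+1) * F (j+1) + d (j-1) * F (j-1))
        = ENNReal.ofReal (|Δu j| + (C (j+1) * |Δv (j+1)| + D (j-1) * |Δv (j-1)|)) := by
      rw [ENNReal.ofReal_add (abs_nonneg _)
          (add_nonneg (mul_nonneg (hC0 _) (abs_nonneg _)) (mul_nonneg (hD0 _) (abs_nonneg _))),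
        ENNReal.ofReal_add (mul_nonneg (hC0 _) (abs_nonneg _)) (mul_nonneg (hD0 _) (abs_nonneg _)),
        ENNReal.ofReal_mul (hC0 _), ENNReal.ofReal_mul (hD0 _)]
    rw [e1, e2]
    exact ENNReal.ofReal_le_ofReal (hptr j)
  have hsum : (∑' j, F j) + ((∑' j, c j * F j) + (∑' j, d j * F j))
      ≤ (∑' j, G j) + ((∑' j, c j * F j) + (∑' j, d j * F j)) := by
    have hL : (∑' j, F j) + ((∑' j, c j * F j) + (∑' j, d j * F j))
        = ∑' j, (F j + (c j * F j + d j * F j)) := by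
      rw [ENNReal.tsum_add, ENNReal.tsum_add]
    have hshift1 : (∑' j : ℤ, c (j+1) * F (j+1)) = ∑' j, c j * F j :=
      (Equiv.addRight (1:ℤ)).tsum_eq (fun j => c j * F j)
    have hshift2 : (∑' j : ℤ, d (j-1) * F (j-1)) = ∑' j, d j * F j :=
      (Equiv.subRight (1:ℤ)).tsum_eq (fun j => d j * F j)
    have hR : (∑' j, G j) + ((∑' j, c j * F j) + (∑' j, d j * F j))
        = ∑' j, (G j + (c (j+1) * F (j+1) + d (j-1) * F (j-1))) := by
      rw [ENNReal.tsum_add, ENNReal.tsum_add, hshift1, hshift2]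
    rw [hL, hR]
    exact ENNReal.tsum_le_tsum hpt
  have hTVv : TV v = ∑' j, F j := rfl
  have hTVu : TV u = ∑' j, G j := rfl
  have hfin : (∑' j, c j * F j) + (∑' j, d j * F j) ≠ ⊤ := by
    have hb : ∀ (e : ℤ → ENNReal), (∀ j, e j ≤ ENNReal.ofReal M) →
        (∑' j, e j * F j) ≤ ENNReal.ofReal M * TV v := by
      intro e he
      calc (∑' j, e j * F j) ≤ ∑' j, ENNReal.ofReal M * F j :=
            ENNReal.tsum_le_tsum (fun j => mul_le_mul_left (he j) _)
        _ = ENNReal.ofReal M * TV v := by rw [ENNReal.tsum_mul_left]; rfl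
    have h1 := hb c (fun j => ENNReal.ofReal_le_ofReal (hCM j))
    have h2 := hb d (fun j => ENNReal.ofReal_le_ofReal (hDM j))
    have hfin' : ENNReal.ofReal M * TV v ≠ ⊤ :=
      ENNReal.mul_ne_top ENNReal.ofReal_ne_top hv.ne
    exact ENNReal.add_ne_top.2 ⟨ne_top_of_le_ne_top hfin' h1, ne_top_of_le_ne_top hfin' h2⟩
  rw [hTVv, hTVu]
  exact (ENNReal.add_le_add_iff_right hfin).mp hsum

set_option maxHeartbeats 1000000 in
/-- Remark after Theorem 1: for `θ = 1`, the new FCT scheme without the monotone first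
step is unconditionally TVD, for either choice `σ̃ = |a|` or `σ̃ = |a| − λa²`: for every
`λ > 0` and `a ≠ 0`, any `v` with `TV(v) < ∞` solving the fully implicit scheme
`v_j = u_j − λ[f̂_{j+1/2}(v) − f̂_{j−1/2}(v)]` satisfies `TV(v) ≤ TV(u)`. -/
theorem newFCT_fully_implicit_TVD (a lam σ : ℝ) (ha : a ≠ 0) (hlam : 0 < lam)
    (hσ : σ = |a| ∨ σ = |a| - lam * a ^ 2)
    (u v : ℤ → ℝ) (hv : TV v < ⊤)
    (hscheme : ∀ j : ℤ,
      v j = u j - lam * (numFlux a σ v j - numFlux a σ v (j - 1))) :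
    TV v ≤ TV u := by
  have ha2 : 0 < a ^ 2 := by positivity
  have hσa : σ ≤ |a| := by
    rcases hσ with h | h
    · exact h.le
    · nlinarith [abs_nonneg a]
  -- ratios
  set g : ℤ → ℝ := fun j => fluxC σ v j with hg
  set r : ℤ → ℝ := fun j => if v (j+1) - v j = 0 then 0 else g j / (v (j+1) - v j) with hr
  set s : ℤ → ℝ := fun j => if v j - v (j-1) = 0 then 0 else g j / (v j - v (j-1)) with hs
  set t : ℤ → ℝ := fun j => if v (j+2) - v (j+1) = 0 then 0 else g j / (v (j+2) - v (j+1)) with ht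
  have key : ∀ j : ℤ, 0 ≤ g j * (σ * (v j - v (j-1)) - g j) ∧
      0 ≤ g j * (σ / 2 * (v (j+1) - v j) - g j) ∧
      0 ≤ g j * (σ * (v (j+2) - v (j+1)) - g j) := fun j => fluxC_key σ v j
  have hrg : ∀ j, g j = r j * (v (j+1) - v j) := by
    intro j
    simp only [hr]
    split_ifs with h
    · have hk := (key j).2.1
      rw [h] at hk ⊢
      have : g j = 0 := by nlinarith
      simpa using this
    · field_simp
  have hsg : ∀ j, g j = s j * (v j - v (j-1)) := by
    intro j
    simp only [hs]
    split_ifs with h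
    · have hk := (key j).1
      rw [h] at hk ⊢
      have : g j = 0 := by nlinarith
      simpa using this
    · field_simp
  have htg : ∀ j, g j = t j * (v (j+2) - v (j+1)) := by
    intro j
    simp only [ht]
    split_ifs with h
    · have hk := (key j).2.2
      rw [h] at hk ⊢
      have : g j = 0 := by nlinarith
      simpa using this
    · field_simp
  have hrb : ∀ j, 0 ≤ r j * (σ/2 - r j) := by
    intro j
    have hk := (key j).2.1
    rw [hrg j] at hk
    simp only [hr] at hk ⊢
    split_ifs with h
    · simp
    · rw [if_neg h] at hk
      have h2 : 0 < (v (j+1) - v j)^2 := by positivity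
      nlinarith
  have hsb : ∀ j, 0 ≤ s j * (σ - s j) := by
    intro j
    have hk := (key j).1
    rw [hsg j] at hk
    simp only [hs] at hk ⊢
    split_ifs with h
    · simp
    · rw [if_neg h] at hk
      have h2 : 0 < (v j - v (j-1))^2 := by positivity
      nlinarith
  have htb : ∀ j, 0 ≤ t j * (σ - t j) := by
    intro j
    have hk := (key j).2.2
    rw [htg j] at hk
    simp only [ht] at hk ⊢
    split_ifs with h
    · simp
    · rw [if_neg h] at hk
      have h2 : 0 < (v (j+2) - v (j+1))^2 := by positivity
      nlinarith
  -- flux difference identity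
  have hdiff : ∀ j : ℤ, u j - v j
      = lam * ((a - |a|)/2 * (v (j+1) - v j) + (a + |a|)/2 * (v j - v (j-1))
          + g j - g (j-1)) := by
    intro j
    have h := hscheme j
    simp only [numFlux, hg] at h ⊢
    rw [show (j:ℤ) - 1 + 1 = j from by ring] at h
    linear_combination -h
  set M : ℝ := lam * (|a| + 2 * |σ|) with hM
  have hM0 : 0 ≤ M := by positivity
  rcases ha.lt_or_gt with haneg | hapos
  · -- a < 0
    have habs : |a| = -a := abs_of_neg haneg
    rw [habs] at hσa
    rcases le_or_gt 0 σ with hσ0 | hσ0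
    · -- σ ≥ 0
      refine harten u v M (fun j => lam * (-a - r j + t (j-1))) (fun _ => 0)
        (fun j => ?_) (fun j => ?_) (fun j => le_refl 0) (fun j => hM0) (fun j => ?_) hv
      · beta_reduce
        have h1 : r j ≤ σ/2 := by nlinarith [hrb j]
        have h2 : 0 ≤ t (j-1) := by nlinarith [htb (j-1)]
        nlinarith
      · beta_reduce
        have h1 : 0 ≤ r j := by nlinarith [hrb j]
        have h2 : t (j-1) ≤ σ := by nlinarith [htb (j-1)]
        have h3 : σ ≤ |σ| := le_abs_self σ
        rw [hM, habs]
        nlinarith [abs_nonneg σ]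
      · beta_reduce
        have hd := hdiff j
        rw [habs] at hd
        have h1 := hrg j
        have h2 := htg (j-1)
        rw [show (j:ℤ) - 1 + 2 = j + 1 from by ring,
          show (j:ℤ) - 1 + 1 = j from by ring] at h2
        linear_combination hd + lam * h1 - lam * h2
    · -- σ < 0
      refine harten u v M (fun j => lam * (-a - r j)) (fun j => lam * (- r j))
        (fun j => ?_) (fun j => ?_) (fun j => ?_) (fun j => ?_) (fun j => ?_) hv
      · beta_reduce
        have h1 : r j ≤ 0 := by nlinarith [hrb j]
        nlinarith
      · beta_reduce
        have h1 : σ/2 ≤ r j := by nlinarith [hrb j]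
        have h3 : -σ ≤ |σ| := neg_le_abs σ
        rw [hM, habs]
        nlinarith [abs_nonneg σ, abs_nonneg a]
      · beta_reduce
        have h1 : r j ≤ 0 := by nlinarith [hrb j]
        nlinarith
      · beta_reduce
        have h1 : σ/2 ≤ r j := by nlinarith [hrb j]
        have h3 : -σ ≤ |σ| := neg_le_abs σ
        rw [hM]
        nlinarith [abs_nonneg σ, abs_nonneg a, le_abs_self a, neg_le_abs a]
      · beta_reduce
        have hd := hdiff j
        rw [habs] at hd
        have h1 := hrg j
        have h2 := hrg (j-1)
        rw [show (j:ℤ) - 1 + 1 = j from by ring] at h2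
        linear_combination hd + lam * h1 - lam * h2
  · -- a > 0
    have habs : |a| = a := abs_of_pos hapos
    rw [habs] at hσa
    rcases le_or_gt 0 σ with hσ0 | hσ0
    · -- σ ≥ 0
      refine harten u v M (fun _ => 0) (fun k => lam * (a + s (k+1) - r k))
        (fun j => le_refl 0) (fun j => hM0) (fun j => ?_) (fun j => ?_) (fun j => ?_) hv
      · beta_reduce
        have h1 : 0 ≤ s (j+1) := by nlinarith [hsb (j+1)]
        have h2 : r j ≤ σ/2 := by nlinarith [hrb j]
        nlinarith
      · beta_reduce
        have h1 : s (j+1) ≤ σ := by nlinarith [hsb (j+1)]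
        have h2 : 0 ≤ r j := by nlinarith [hrb j]
        have h3 : σ ≤ |σ| := le_abs_self σ
        rw [hM, habs]
        nlinarith [abs_nonneg σ]
      · beta_reduce
        have hd := hdiff j
        rw [habs] at hd
        have h1 := hsg j
        have h2 := hrg (j-1)
        rw [show (j:ℤ) - 1 + 1 = j from by ring] at h2
        rw [show (j:ℤ) - 1 + 1 = j from by ring]
        linear_combination hd + lam * h1 - lam * h2
    · -- σ < 0
      refine harten u v M (fun j => lam * (- r j)) (fun k => lam * (a - r k))
        (fun j => ?_) (fun j => ?_) (fun j => ?_) (fun j => ?_) (fun j => ?_) hv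
      · beta_reduce
        have h1 : r j ≤ 0 := by nlinarith [hrb j]
        nlinarith
      · beta_reduce
        have h1 : σ/2 ≤ r j := by nlinarith [hrb j]
        have h3 : -σ ≤ |σ| := neg_le_abs σ
        rw [hM]
        nlinarith [abs_nonneg σ, abs_nonneg a, le_abs_self a, neg_le_abs a]
      · beta_reduce
        have h1 : r j ≤ 0 := by nlinarith [hrb j]
        nlinarith
      · beta_reduce
        have h1 : σ/2 ≤ r j := by nlinarith [hrb j]
        have h3 : -σ ≤ |σ| := neg_le_abs σ
        rw [hM, habs]
        nlinarith [abs_nonneg σ, abs_nonneg a]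
      · beta_reduce
        have hd := hdiff j
        rw [habs] at hd
        have h1 := hrg j
        have h2 := hrg (j-1)
        rw [show (j:ℤ) - 1 + 1 = j from by ring] at h2
        linear_combination hd + lam * h1 - lam * h2
end

section
/- The modified-flux FCT limiters lie in Sweby's TVD region: for every n with 0 ≤ n ≤ 2, the limiter function φ_n(r) = max{0, min(n, r), min(1, n·r)} satisfies φ_n(r) = 0 for all r ≤ 0, and 0 ≤ φ_n(r) ≤ min(2r, 2) for all r > 0. -/
/-- The modified-flux FCT limiter with parameter `n` as a function of the gradient
ratio `r`: `φ_n(r) = max{0, min n r, min(1, n·r)}`. -/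
noncomputable def phi (n r : ℝ) : ℝ :=
  max 0 (max (min n r) (min 1 (n * r)))

/-- The modified-flux FCT limiters lie in Sweby's TVD region: for `0 ≤ n ≤ 2`,
`φ_n(r) = 0` for `r ≤ 0` and `0 ≤ φ_n(r) ≤ min(2r, 2)` for `r > 0`. -/
theorem phi_in_sweby_tvd_region (n : ℝ) (hn0 : 0 ≤ n) (hn2 : n ≤ 2) :
    (∀ r : ℝ, r ≤ 0 → phi n r = 0) ∧
    (∀ r : ℝ, 0 < r → 0 ≤ phi n r ∧ phi n r ≤ min (2 * r) 2) := by
  constructor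
  · intro r hr
    have h1 : min n r ≤ 0 := le_trans (min_le_right _ _) hr
    have h2 : min 1 (n * r) ≤ 0 :=
      le_trans (min_le_right _ _) (mul_nonpos_of_nonneg_of_nonpos hn0 hr)
    have : max (min n r) (min 1 (n * r)) ≤ 0 := max_le h1 h2
    simpa [phi] using max_eq_left this
  · intro r hr
    refine ⟨le_max_left _ _, ?_⟩
    have h0 : (0 : ℝ) ≤ min (2 * r) 2 := le_min (by linarith) (by norm_num)
    have h1 : min n r ≤ min (2 * r) 2 :=
      le_min (le_trans (min_le_right _ _) (by linarith)) (le_trans (min_le_left _ _) hn2)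
    have h2 : min 1 (n * r) ≤ min (2 * r) 2 :=
      le_min (le_trans (min_le_right _ _) (by nlinarith)) (le_trans (min_le_left _ _) (by norm_num))
    exact max_le h0 (max_le h1 h2)
end

section
/- Second-order regions of the modified-flux FCT limiters: for every n with 1 ≤ n ≤ 2 and every r > 0 with either r ≤ 1/2 or r ≥ 2/n, the limiter function φ_n(r) = max{0, min(n, r), min(1, n·r)} lies in Sweby's second-order region, i.e., min(1, r) ≤ φ_n(r) ≤ max(1, r). -/
/-- Second-order regions of the modified-flux FCT limiters: for `1 ≤ n ≤ 2` and `r > 0`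
with `r ≤ 1/2` or `r ≥ 2/n`, the limiter lies in Sweby's second-order region,
i.e. `min(1, r) ≤ φ_n(r) ≤ max(1, r)`. -/
theorem phi_second_order_region (n : ℝ) (hn1 : 1 ≤ n) (hn2 : n ≤ 2)
    (r : ℝ) (hr : 0 < r) (hcase : r ≤ 1 / 2 ∨ 2 / n ≤ r) :
    min 1 r ≤ phi n r ∧ phi n r ≤ max 1 r := by
  have hn0 : (0:ℝ) < n := by linarith
  unfold phi
  constructor
  · rcases hcase with h | h
    · have h1 : min n r = r := min_eq_right (by linarith)
      have : min 1 r ≤ r := min_le_right _ _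
      calc min 1 r ≤ r := this
        _ = min n r := h1.symm
        _ ≤ max (min n r) (min 1 (n*r)) := le_max_left _ _
        _ ≤ _ := le_max_right _ _
    · have h2 : (2:ℝ) ≤ n * r := by
        rw [div_le_iff₀ hn0] at h
        linarith
      have h1 : min 1 (n*r) = 1 := min_eq_left (by linarith)
      calc min 1 r ≤ 1 := min_le_left _ _
        _ = min 1 (n*r) := h1.symm
        _ ≤ max (min n r) (min 1 (n*r)) := le_max_right _ _
        _ ≤ _ := le_max_right _ _
  · apply max_le
    · exact le_max_of_le_left zero_le_one
    · apply max_le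
      · exact le_max_of_le_right (min_le_right _ _)
      · exact le_max_of_le_left (min_le_left _ _)
end
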